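/- arXiv:1912.03261 — 3 statements merged into one kernel-verified Lean document; each statement's English description precedes it below -/
import Mathlib

section
/- Let ξ = (ξ_n)_{n∈ℕ} be a lower semi-frame of H. Let Y : ℓ²(ℕ) → H_ξ be the unique bounded operator such that Y c = C_ξ^{-1} c for c ∈ R(C_ξ) and Y c = 0 for c ∈ R(C_ξ)^⊥, and set η_n := Y e_n, where (e_n)_{n∈ℕ} is the canonical orthonormal basis of ℓ²(ℕ). Then η_n = T_ξ^{-1} P ξ_n for every n ∈ ℕ. -/
noncomputable section
open scoped InnerProductSpace ComplexInnerProductSpace ComplexConjugate ENNReal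
open Filter Topology

/- `H` is a separable complex Hilbert space. -/
variable {H : Type} [NormedAddCommGroup H] [InnerProductSpace ℂ H] [CompleteSpace H]
  [TopologicalSpace.SeparableSpace H]

/-- The space `ℓ²(ℕ)` of square-summable complex sequences. -/
abbrev l2 : Type := lp (fun _ : ℕ => ℂ) 2

/-- The domain of the analysis operator `C_ξ`:
`D(C_ξ) = {f ∈ H : Σ_n |⟨f,ξ_n⟩|² < ∞}`.  (The paper's inner product `⟨f,ξ_n⟩`, linear in `f`,
is `⟪ξ n, f⟫_ℂ` in Mathlib's convention.) -/
def domC (ξ : ℕ → H) : Set H := {f : H | Memℓp (fun n => ⟪ξ n, f⟫_ℂ) 2}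

open Classical in
/-- The analysis operator `C_ξ f = (⟨f,ξ_n⟩)_n`, with junk value `0` outside of its domain. -/
def Cfun (ξ : ℕ → H) (f : H) : l2 :=
  if h : Memℓp (fun n => ⟪ξ n, f⟫_ℂ) 2 then ⟨_, h⟩ else 0

/-- The domain of the synthesis operator `D_ξ`:
`D(D_ξ) = {(c_n) ∈ ℓ² : Σ_n c_n ξ_n converges in norm in H}`. -/
def domD (ξ : ℕ → H) : Set l2 :=
  {c : l2 | ∃ L : H, Tendsto (fun k : ℕ => ∑ n ∈ Finset.range k, c n • ξ n) atTop (𝓝 L)}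

/-- The domain of the frame operator `S_ξ`:
`D(S_ξ) = {f ∈ H : Σ_n ⟨f,ξ_n⟩ ξ_n converges in norm in H}`. -/
def domS (ξ : ℕ → H) : Set H :=
  {f : H | ∃ L : H, Tendsto (fun k : ℕ => ∑ n ∈ Finset.range k, ⟪ξ n, f⟫_ℂ • ξ n) atTop (𝓝 L)}

/-- The domain of the generalized frame operator `T_ξ`: those `f ∈ D(C_ξ)` for which there is
`h` in `H_ξ = closure D(C_ξ)` with `Σ_n ⟨f,ξ_n⟩⟨ξ_n,g⟩ = ⟨h,g⟩` for all `g ∈ D(C_ξ)`. -/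
def domT (ξ : ℕ → H) : Set H :=
  {f : H | f ∈ domC ξ ∧ ∃ h ∈ closure (domC ξ), ∀ g ∈ domC ξ,
    ∑' n : ℕ, ⟪ξ n, f⟫_ℂ * ⟪g, ξ n⟫_ℂ = ⟪g, h⟫_ℂ}

/-- The domain of `Q_ξ`: those `(c_n) ∈ ℓ²` whose partial sums `Σ_{n<k} c_n ξ_n`
converge weakly in `H`. -/
def domQ (ξ : ℕ → H) : Set l2 :=
  {c : l2 | ∃ L : H, ∀ y : H,
    Tendsto (fun k : ℕ => ⟪y, ∑ n ∈ Finset.range k, c n • ξ n⟫_ℂ) atTop (𝓝 ⟪y, L⟫_ℂ)}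

/-- The domain of the weak frame operator `W_ξ`: those `f ∈ H` whose partial sums
`Σ_{n<k} ⟨f,ξ_n⟩ ξ_n` converge weakly in `H`. -/
def domW (ξ : ℕ → H) : Set H :=
  {f : H | ∃ L : H, ∀ y : H,
    Tendsto (fun k : ℕ => ⟪y, ∑ n ∈ Finset.range k, ⟪ξ n, f⟫_ℂ • ξ n⟫_ℂ) atTop (𝓝 ⟪y, L⟫_ℂ)}

/-!
With `u := T_ξ⁻¹ P ξ_n`, the vector `e_n - C_ξ u` is orthogonal to `R(C_ξ)`: for `g ∈ D(C_ξ)`,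
`⟨C_ξ g, e_n⟩ = ⟨g, ξ_n⟩ = ⟨g, P ξ_n⟩ = ⟨g, T_ξ u⟩ = ⟨C_ξ g, C_ξ u⟩`,
the second equality because `g ∈ H_ξ`. Hence `Y e_n = Y (C_ξ u) = u`.
-/

section AnalysisOperator

variable {E : Type} [NormedAddCommGroup E] [InnerProductSpace ℂ E] {ξ : ℕ → E}

theorem Cfun_apply {f : E} (hf : f ∈ domC ξ) (k : ℕ) :
    Cfun ξ f k = ⟪ξ k, f⟫_ℂ := by
  rw [Cfun, dif_pos (show Memℓp (fun m => ⟪ξ m, f⟫_ℂ) 2 from hf)]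

theorem inner_Cfun_single {f : E} (hf : f ∈ domC ξ) (n : ℕ) :
    ⟪Cfun ξ f, lp.single 2 n (1 : ℂ)⟫_ℂ = ⟪f, ξ n⟫_ℂ := by
  rw [lp.inner_single_right, Cfun_apply hf, RCLike.inner_apply, one_mul, inner_conj_symm]

theorem inner_Cfun_Cfun {f g : E} (hf : f ∈ domC ξ) (hg : g ∈ domC ξ) :
    ⟪Cfun ξ g, Cfun ξ f⟫_ℂ = ∑' n : ℕ, ⟪ξ n, f⟫_ℂ * ⟪g, ξ n⟫_ℂ := by
  rw [lp.inner_eq_tsum]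
  refine tsum_congr fun n => ?_
  rw [Cfun_apply hf, Cfun_apply hg, RCLike.inner_apply, inner_conj_symm]

theorem inner_Cfun_single_sub_Cfun_eq_zero {u : E} {n : ℕ} (hu : u ∈ domC ξ)
    (hTu : ∀ g ∈ domC ξ, ∑' k : ℕ, ⟪ξ k, u⟫_ℂ * ⟪g, ξ k⟫_ℂ = ⟪g, ξ n⟫_ℂ)
    {g : E} (hg : g ∈ domC ξ) :
    ⟪Cfun ξ g, lp.single 2 n (1 : ℂ) - Cfun ξ u⟫_ℂ = 0 := by
  rw [inner_sub_right, inner_Cfun_single hg, inner_Cfun_Cfun hu hg, hTu g hg, sub_self]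

end AnalysisOperator

theorem statement3_general (ξ : ℕ → H)
    (P : H → H)
    (hP : ∀ x : H, P x ∈ closure (domC ξ) ∧ ∀ z ∈ closure (domC ξ), ⟪z, x - P x⟫_ℂ = 0)
    (Tinv : H → H)
    (hTinv : ∀ h ∈ closure (domC ξ), Tinv h ∈ domT ξ ∧
      ∀ g ∈ domC ξ, ∑' n : ℕ, ⟪ξ n, Tinv h⟫_ℂ * ⟪g, ξ n⟫_ℂ = ⟪g, h⟫_ℂ)
    (Y : l2 →L[ℂ] H)
    (hY1 : ∀ f ∈ domC ξ, Y (Cfun ξ f) = f)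
    (hY2 : ∀ c : l2, (∀ f ∈ domC ξ, ⟪Cfun ξ f, c⟫_ℂ = 0) → Y c = 0) :
    ∀ n : ℕ, Y (lp.single 2 n (1 : ℂ)) = Tinv (P (ξ n)) := by
  intro n
  obtain ⟨hPξ_mem, hPξ_orth⟩ := hP (ξ n)
  obtain ⟨⟨hu, -⟩, hTu⟩ := hTinv (P (ξ n)) hPξ_mem
  have hTu' : ∀ g ∈ domC ξ,
      ∑' k : ℕ, ⟪ξ k, Tinv (P (ξ n))⟫_ℂ * ⟪g, ξ k⟫_ℂ = ⟪g, ξ n⟫_ℂ := fun g hg => by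
    have hPξ : ⟪g, ξ n⟫_ℂ = ⟪g, P (ξ n)⟫_ℂ :=
      sub_eq_zero.mp (by rw [← inner_sub_right]; exact hPξ_orth g (subset_closure hg))
    rw [hTu g hg, hPξ]
  have hYsub := hY2 _ fun g hg => inner_Cfun_single_sub_Cfun_eq_zero hu hTu' hg
  rwa [map_sub, sub_eq_zero, hY1 _ hu] at hYsub

/-- Let `ξ` be a lower semi-frame of `H`, `P` the orthogonal projection onto
`H_ξ = closure D(C_ξ)`, `Tinv` the bounded inverse of the generalized frame operator, and let
`Y : ℓ² → H` be the unique bounded operator with `Y (C_ξ f) = f` for `f ∈ D(C_ξ)` (i.e.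
`Y = C_ξ⁻¹` on `R(C_ξ)`) and `Y c = 0` for `c ⊥ R(C_ξ)`.  With `η_n := Y e_n`
(`e_n` the canonical orthonormal basis of `ℓ²`), one has `η_n = T_ξ⁻¹ P ξ_n` for every `n`. -/
theorem statement3 (ξ : ℕ → H) (A : ℝ) (hA : 0 < A)
    (hlow : ∀ f : H, ENNReal.ofReal (A * ‖f‖ ^ 2) ≤ ∑' n : ℕ, ((‖⟪ξ n, f⟫_ℂ‖₊ : ℝ≥0∞) ^ 2))
    (P : H → H)
    (hP : ∀ x : H, P x ∈ closure (domC ξ) ∧ ∀ z ∈ closure (domC ξ), ⟪z, x - P x⟫_ℂ = 0)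
    (Tinv : H → H)
    (hTinv : ∀ h ∈ closure (domC ξ), Tinv h ∈ domT ξ ∧
      ∀ g ∈ domC ξ, ∑' n : ℕ, ⟪ξ n, Tinv h⟫_ℂ * ⟪g, ξ n⟫_ℂ = ⟪g, h⟫_ℂ)
    (Y : l2 →L[ℂ] H)
    (hY1 : ∀ f ∈ domC ξ, Y (Cfun ξ f) = f)
    (hY2 : ∀ c : l2, (∀ f ∈ domC ξ, ⟪Cfun ξ f, c⟫_ℂ = 0) → Y c = 0) :
    ∀ n : ℕ, Y (lp.single 2 n (1 : ℂ)) = Tinv (P (ξ n)) :=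
  statement3_general ξ P hP Tinv hTinv Y hY1 hY2
end
end

section
/- Let ξ = (ξ_n)_{n∈ℕ} be a sequence in H whose synthesis operator D_ξ is closed. The following are equivalent: (1) ξ is a lower semi-frame of H; (2) there exists a Bessel sequence (η_n)_{n∈ℕ} in H such that f = Σ_{n∈ℕ} ⟨f,η_n⟩ξ_n for every f ∈ H; (3) R(D_ξ) = H, i.e. the synthesis operator is surjective. -/
noncomputable section
open scoped InnerProductSpace ComplexInnerProductSpace ComplexConjugate ENNReal
open Filter Topology

/- `H` is a separable complex Hilbert space. -/
variable {H : Type} [NormedAddCommGroup H] [InnerProductSpace ℂ H] [CompleteSpace H]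
  [TopologicalSpace.SeparableSpace H]

/-!
Let `G ⊆ ℓ² ⊕₂ H` be the closed graph of `D_ξ`. Testing against the graph points `(eₙ, ξₙ)` shows
that every `q ∈ Gᗮ` has the form `(-C_ξ f, f)`, so a lower frame bound `A` gives
`√A ‖q.snd‖ ≤ ‖q.fst‖` on `Gᗮ`. Hence `q.fst ↦ -⟨y, q.snd⟩` is a bounded functional on the closed
range of `q ↦ q.fst`; its Riesz vector `c` makes `(c, y)` orthogonal to `Gᗮ`, i.e.
`(c, y) ∈ Gᗮᗮ = G`, so `D_ξ` is onto.

If `D_ξ` is onto, the open mapping theorem gives a bounded `R : H → ℓ²` with `D_ξ R = id`, and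
`ηₙ = R* eₙ` is a Bessel sequence with `⟨f, ηₙ⟩ = (R f)ₙ`, so that `f = Σ ⟨f, ηₙ⟩ ξₙ`.

Such a reconstruction formula writes `‖f‖²` as the `ℓ²` inner product of `(⟨f, ηₙ⟩)ₙ` and
`(⟨f, ξₙ⟩)ₙ`; Cauchy–Schwarz and the Bessel bound `B` give the lower frame bound `B⁻¹`.
-/

section SquareSummable

variable {ι E : Type*} [NormedAddCommGroup E]

theorem lp.tsum_nnnorm_sq_eq_ofReal (x : lp (fun _ : ι => E) 2) :
    ∑' i, (‖x i‖₊ : ℝ≥0∞) ^ 2 = ENNReal.ofReal (‖x‖ ^ 2) := by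
  have hsum : Summable fun i => ‖x i‖ ^ 2 := by
    simpa using (lp.memℓp x).summable (by norm_num : 0 < (2 : ℝ≥0∞).toReal)
  have hnorm : ‖x‖ ^ 2 = ∑' i, ‖x i‖ ^ 2 := by
    simpa using lp.norm_rpow_eq_tsum (by norm_num : 0 < (2 : ℝ≥0∞).toReal) x
  rw [hnorm, ENNReal.ofReal_tsum_of_nonneg (fun _ => by positivity) hsum]
  simp [ENNReal.ofReal_pow, enorm_eq_nnnorm]

theorem memℓp_two_of_tsum_nnnorm_sq_ne_top {g : ι → E}
    (h : ∑' i, (‖g i‖₊ : ℝ≥0∞) ^ 2 ≠ ⊤) : Memℓp g 2 := by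
  rw [memℓp_gen_iff (by norm_num : 0 < (2 : ℝ≥0∞).toReal)]
  have : Summable fun i => ‖g i‖₊ ^ 2 := by
    simpa [ENNReal.coe_pow] using ENNReal.tsum_coe_ne_top_iff_summable.mp (by simpa using h)
  simpa using NNReal.summable_coe.mpr this

end SquareSummable

section RightInverse

variable {𝕜 E F : Type*} [RCLike 𝕜] [NormedAddCommGroup E] [InnerProductSpace 𝕜 E]
  [CompleteSpace E] [NormedAddCommGroup F] [NormedSpace 𝕜 F] [CompleteSpace F]

theorem ContinuousLinearMap.exists_rightInverse_of_range_eq_top (T : E →L[𝕜] F)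
    (hT : T.range = ⊤) : ∃ R : F →L[𝕜] E, T ∘L R = .id 𝕜 F := by
  have := T.isClosed_ker.completeSpace_coe
  set S : T.kerᗮ →L[𝕜] F := T ∘L T.kerᗮ.subtypeL
  have hS_ker : S.ker = ⊥ := by
    rw [LinearMap.ker_eq_bot']
    intro x hx
    exact Subtype.ext <| (Submodule.mem_bot 𝕜).mp <|
      T.ker.inf_orthogonal_eq_bot ▸ ⟨hx, x.2⟩
  have hS_range : S.range = ⊤ := by
    rw [LinearMap.range_eq_top]
    intro y
    obtain ⟨x, rfl⟩ := LinearMap.range_eq_top.mp hT y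
    refine ⟨⟨x - T.ker.starProjection x, T.ker.sub_starProjection_mem_orthogonal x⟩, ?_⟩
    have : T (T.ker.starProjection x) = 0 := T.ker.starProjection_apply_mem x
    simp [S, this]
  set e := ContinuousLinearEquiv.ofBijective S hS_ker hS_range
  exact ⟨T.kerᗮ.subtypeL ∘L (e.symm : F →L[𝕜] T.kerᗮ),
    ContinuousLinearMap.ext fun y => e.apply_symm_apply y⟩

end RightInverse

section ProductHilbert

variable {𝕜 E F : Type*} [RCLike 𝕜]
  [NormedAddCommGroup E] [InnerProductSpace 𝕜 E] [CompleteSpace E]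
  [NormedAddCommGroup F] [InnerProductSpace 𝕜 F] [CompleteSpace F]

theorem Submodule.exists_toLp_mem_of_norm_snd_le (G : Submodule 𝕜 (WithLp 2 (E × F)))
    (hG : IsClosed (G : Set (WithLp 2 (E × F)))) {K : ℝ}
    (hK : ∀ q ∈ Gᗮ, ‖q.snd‖ ≤ K * ‖q.fst‖) (y : F) :
    ∃ x : E, WithLp.toLp 2 (x, y) ∈ G := by
  have : CompleteSpace G := hG.completeSpace_coe
  set T : Gᗮ →L[𝕜] E := WithLp.fstL 2 𝕜 E F ∘L Gᗮ.subtypeL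
  have hT : ∀ q : Gᗮ, ‖q‖ ≤ (1 + K).toNNReal * ‖T q‖ := fun ⟨q, hq⟩ => calc
    ‖q‖ ≤ ‖q.fst‖ + ‖q.snd‖ := by
        rw [WithLp.prod_norm_eq_of_L2]
        exact Real.sqrt_le_iff.mpr
          ⟨by positivity, by nlinarith [norm_nonneg q.fst, norm_nonneg q.snd]⟩
    _ ≤ (1 + K) * ‖q.fst‖ := by linarith [hK q hq]
    _ ≤ (1 + K).toNNReal * ‖q.fst‖ := by gcongr; exact Real.le_coe_toNNReal _
  have hanti := T.antilipschitz_of_bound hT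
  have hclosed : IsClosed (Set.range T) := hanti.isClosed_range T.uniformContinuous
  have := hanti.completeSpace_range_clm
  set e := T.equivRange hanti.injective hclosed
  set P := (T : Gᗮ →ₗ[𝕜] E).range.orthogonalProjectionOnto
  -- `φ (q.fst) = -⟪y, q.snd⟫` for `q ∈ Gᗮ`, and `φ` vanishes on the complement of the range of `T`
  set φ : E →L[𝕜] 𝕜 := -(innerSL 𝕜 y ∘L WithLp.sndL 2 𝕜 E F ∘L Gᗮ.subtypeL ∘L
    (e.symm : (T : Gᗮ →ₗ[𝕜] E).range →L[𝕜] Gᗮ) ∘L P)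
  refine ⟨(InnerProductSpace.toDual 𝕜 E).symm φ, ?_⟩
  rw [← G.orthogonal_orthogonal, Submodule.mem_orthogonal]
  intro q hq
  have hφ : φ q.fst = -⟪y, q.snd⟫_𝕜 := by
    have hback : e.symm (P (T ⟨q, hq⟩)) = ⟨q, hq⟩ := by
      rw [ContinuousLinearEquiv.symm_apply_eq]
      exact Subtype.ext <| Submodule.starProjection_eq_self_iff.mpr ⟨_, rfl⟩
    change -⟪y, (e.symm (P (T ⟨q, hq⟩)) : WithLp 2 (E × F)).snd⟫_𝕜 = _
    rw [hback]
  rw [WithLp.prod_inner_apply, ← inner_conj_symm, InnerProductSpace.toDual_symm_apply]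
  simp [hφ]

theorem Submodule.exists_continuousLinearMap_toLp_mem (G : Submodule 𝕜 (WithLp 2 (E × F)))
    (hG : IsClosed (G : Set (WithLp 2 (E × F))))
    (hsurj : ∀ y : F, ∃ x : E, WithLp.toLp 2 (x, y) ∈ G) :
    ∃ R : F →L[𝕜] E, ∀ y, WithLp.toLp 2 (R y, y) ∈ G := by
  have : CompleteSpace G := hG.completeSpace_coe
  set T : G →L[𝕜] F := WithLp.sndL 2 𝕜 E F ∘L G.subtypeL
  have hT : T.range = ⊤ := LinearMap.range_eq_top.mpr fun y =>
    let ⟨_, hx⟩ := hsurj y; ⟨⟨_, hx⟩, rfl⟩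
  obtain ⟨S, hS⟩ := T.exists_rightInverse_of_range_eq_top hT
  refine ⟨WithLp.fstL 2 𝕜 E F ∘L G.subtypeL ∘L S, fun y => ?_⟩
  have hy : (S y : WithLp 2 (E × F)).snd = y := congr($hS y)
  have hSy : WithLp.toLp 2 ((S y : WithLp 2 (E × F)).fst, (S y : WithLp 2 (E × F)).snd) ∈ G :=
    (S y).2
  rwa [hy] at hSy

end ProductHilbert

section Synthesis

variable {E : Type*} [NormedAddCommGroup E] [NormedSpace ℂ E]

def synthesisGraph (ξ : ℕ → E) : Submodule ℂ (WithLp 2 (l2 × E)) where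
  carrier := {p | Tendsto (fun k => ∑ n ∈ Finset.range k, p.fst n • ξ n) atTop (𝓝 p.snd)}
  zero_mem' := by simp
  add_mem' {p q} hp hq := by
    simpa [add_smul, Finset.sum_add_distrib] using hp.add hq
  smul_mem' a p hp := by
    simpa [smul_smul, Finset.smul_sum] using hp.const_smul a

variable {ξ : ℕ → E}

theorem toLp_mem_synthesisGraph_iff {c : l2} {x : E} :
    WithLp.toLp 2 (c, x) ∈ synthesisGraph ξ ↔
      Tendsto (fun k => ∑ n ∈ Finset.range k, c n • ξ n) atTop (𝓝 x) :=
  Iff.rfl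

theorem toLp_single_mem_synthesisGraph (n : ℕ) :
    WithLp.toLp 2 (lp.single 2 n (1 : ℂ), ξ n) ∈ synthesisGraph ξ := by
  rw [toLp_mem_synthesisGraph_iff]
  refine tendsto_const_nhds.congr' ?_
  filter_upwards [eventually_gt_atTop n] with k hk
  rw [Finset.sum_eq_single_of_mem n (Finset.mem_range.mpr hk)]
  · simp
  · intro m _ hmn
    simp [lp.single_apply, hmn]

end Synthesis

section Frames

variable {E : Type*} [NormedAddCommGroup E] [InnerProductSpace ℂ E] {ξ : ℕ → E}

theorem fst_apply_of_mem_orthogonal_synthesisGraph {q : WithLp 2 (l2 × E)}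
    (hq : q ∈ (synthesisGraph ξ)ᗮ) (n : ℕ) : q.fst n = -⟪ξ n, q.snd⟫_ℂ := by
  have h := (Submodule.mem_orthogonal _ _).mp hq _ (toLp_single_mem_synthesisGraph n)
  rw [WithLp.prod_inner_apply, lp.inner_single_left] at h
  simp only [RCLike.inner_apply, map_one, mul_one] at h
  exact eq_neg_of_add_eq_zero_left h

theorem inner_eq_inner_of_tendsto {c : l2} {x y : E}
    (hc : Tendsto (fun k => ∑ n ∈ Finset.range k, c n • ξ n) atTop (𝓝 x))
    (hy : Memℓp (fun n => ⟪ξ n, y⟫_ℂ) 2) :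
    ⟪x, y⟫_ℂ = ⟪c, (⟨_, hy⟩ : l2)⟫_ℂ := by
  refine tendsto_nhds_unique (hc.inner tendsto_const_nhds)
    ((lp.hasSum_inner c _).tendsto_sum_nat.congr fun k => ?_)
  simp [sum_inner, inner_smul_left, mul_comm]

theorem sq_norm_le_norm_mul_norm_of_tendsto {c : l2} {x : E}
    (hc : Tendsto (fun k => ∑ n ∈ Finset.range k, c n • ξ n) atTop (𝓝 x))
    (hx : Memℓp (fun n => ⟪ξ n, x⟫_ℂ) 2) :
    ‖x‖ ^ 2 ≤ ‖c‖ * ‖(⟨_, hx⟩ : l2)‖ := calc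
  ‖x‖ ^ 2 = ‖⟪x, x⟫_ℂ‖ := by simp [inner_self_eq_norm_sq_to_K]
  _ = ‖⟪c, (⟨_, hx⟩ : l2)⟫_ℂ‖ := by rw [inner_eq_inner_of_tendsto hc hx]
  _ ≤ ‖c‖ * ‖(⟨_, hx⟩ : l2)‖ := norm_inner_le_norm _ _

def IsLowerSemiFrameWith (ξ : ℕ → E) (A : ℝ) : Prop :=
  ∀ f : E, ENNReal.ofReal (A * ‖f‖ ^ 2) ≤ ∑' n, (‖⟪ξ n, f⟫_ℂ‖₊ : ℝ≥0∞) ^ 2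

def IsBesselWith (η : ℕ → E) (B : ℝ) : Prop :=
  ∀ f : E, ∑' n, (‖⟪η n, f⟫_ℂ‖₊ : ℝ≥0∞) ^ 2 ≤ ENNReal.ofReal (B * ‖f‖ ^ 2)

variable {η : ℕ → E} {A B : ℝ}

theorem IsLowerSemiFrameWith.norm_snd_le_of_mem_orthogonal (hξ : IsLowerSemiFrameWith ξ A)
    (hA : 0 < A) {q : WithLp 2 (l2 × E)} (hq : q ∈ (synthesisGraph ξ)ᗮ) :
    ‖q.snd‖ ≤ (√A)⁻¹ * ‖q.fst‖ := by
  have hsum : ∑' n, (‖⟪ξ n, q.snd⟫_ℂ‖₊ : ℝ≥0∞) ^ 2 = ENNReal.ofReal (‖q.fst‖ ^ 2) := by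
    rw [← lp.tsum_nnnorm_sq_eq_ofReal]
    simp [fst_apply_of_mem_orthogonal_synthesisGraph hq]
  have h := hξ q.snd
  rw [hsum, ENNReal.ofReal_le_ofReal_iff (by positivity)] at h
  rw [inv_mul_eq_div, le_div_iff₀' (Real.sqrt_pos.2 hA)]
  have := Real.sqrt_le_sqrt h
  rwa [Real.sqrt_mul hA.le, Real.sqrt_sq (norm_nonneg _), Real.sqrt_sq (norm_nonneg _)] at this

theorem IsLowerSemiFrameWith.exists_toLp_mem_synthesisGraph [CompleteSpace E]
    (hξ : IsLowerSemiFrameWith ξ A) (hA : 0 < A)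
    (hG : IsClosed (synthesisGraph ξ : Set (WithLp 2 (l2 × E)))) (x : E) :
    ∃ c : l2, WithLp.toLp 2 (c, x) ∈ synthesisGraph ξ :=
  (synthesisGraph ξ).exists_toLp_mem_of_norm_snd_le hG
    (fun _ hq => hξ.norm_snd_le_of_mem_orthogonal hA hq) x

theorem inner_adjoint_single_one [CompleteSpace E] (R : E →L[ℂ] l2) (n : ℕ) (f : E) :
    ⟪ContinuousLinearMap.adjoint R (lp.single 2 n 1), f⟫_ℂ = R f n := by
  rw [ContinuousLinearMap.adjoint_inner_left, lp.inner_single_left]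
  simp

theorem exists_isBesselWith_of_tendsto [CompleteSpace E] (R : E →L[ℂ] l2)
    (hR : ∀ f, Tendsto (fun k => ∑ n ∈ Finset.range k, R f n • ξ n) atTop (𝓝 f)) :
    ∃ η : ℕ → E, (∃ B > 0, IsBesselWith η B) ∧
      ∀ f, Tendsto (fun k => ∑ n ∈ Finset.range k, ⟪η n, f⟫_ℂ • ξ n) atTop (𝓝 f) := by
  refine ⟨fun n => ContinuousLinearMap.adjoint R (lp.single 2 n 1),
    ⟨‖R‖ ^ 2 + 1, by positivity, fun f => ?_⟩, fun f => ?_⟩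
  · simp only [inner_adjoint_single_one]
    rw [lp.tsum_nnnorm_sq_eq_ofReal]
    gcongr
    calc ‖R f‖ ^ 2 ≤ (‖R‖ * ‖f‖) ^ 2 := by gcongr; exact R.le_opNorm f
      _ ≤ (‖R‖ ^ 2 + 1) * ‖f‖ ^ 2 := by nlinarith [sq_nonneg ‖f‖]
  · simpa only [inner_adjoint_single_one] using hR f

theorem IsBesselWith.isLowerSemiFrameWith_inv (hB : 0 < B) (hη : IsBesselWith η B)
    (hrec : ∀ f, Tendsto (fun k => ∑ n ∈ Finset.range k, ⟪η n, f⟫_ℂ • ξ n) atTop (𝓝 f)) :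
    IsLowerSemiFrameWith ξ B⁻¹ := by
  intro f
  by_cases htop : ∑' n, (‖⟪ξ n, f⟫_ℂ‖₊ : ℝ≥0∞) ^ 2 = ⊤
  · simp [htop]
  have hb : Memℓp (fun n => ⟪ξ n, f⟫_ℂ) 2 := memℓp_two_of_tsum_nnnorm_sq_ne_top htop
  have ha : Memℓp (fun n => ⟪η n, f⟫_ℂ) 2 :=
    memℓp_two_of_tsum_nnnorm_sq_ne_top (ne_top_of_le_ne_top ENNReal.ofReal_ne_top (hη f))
  have ha_le : ‖(⟨_, ha⟩ : l2)‖ ^ 2 ≤ B * ‖f‖ ^ 2 :=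
    (ENNReal.ofReal_le_ofReal_iff (by positivity)).mp
      ((lp.tsum_nnnorm_sq_eq_ofReal (⟨_, ha⟩ : l2)).symm.trans_le (hη f))
  have hf := sq_norm_le_norm_mul_norm_of_tendsto (c := ⟨_, ha⟩) (hrec f) hb
  refine (ENNReal.ofReal_le_ofReal ?_).trans_eq (lp.tsum_nnnorm_sq_eq_ofReal (⟨_, hb⟩ : l2)).symm
  rw [inv_mul_le_iff₀ hB]
  rcases (norm_nonneg f).eq_or_lt with hf0 | hf0
  · rw [← hf0, zero_pow two_ne_zero]
    positivity
  refine le_of_mul_le_mul_left ?_ (pow_pos hf0 2)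
  nlinarith [mul_le_mul hf hf (by positivity) (by positivity),
    mul_le_mul_of_nonneg_right ha_le (sq_nonneg ‖(⟨_, hb⟩ : l2)‖)]

end Frames

section SynthesisOperator

variable {E : Type} [NormedAddCommGroup E] [InnerProductSpace ℂ E] {ξ : ℕ → E}

theorem mem_synthesisGraph_iff {D : l2 → E}
    (hD : ∀ c ∈ domD ξ, Tendsto (fun k => ∑ n ∈ Finset.range k, c n • ξ n) atTop (𝓝 (D c)))
    {p : WithLp 2 (l2 × E)} :
    p ∈ synthesisGraph ξ ↔ p.fst ∈ domD ξ ∧ D p.fst = p.snd :=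
  ⟨fun hp => ⟨⟨_, hp⟩, tendsto_nhds_unique (hD _ ⟨_, hp⟩) hp⟩, fun ⟨hc, hDc⟩ => by
    change Tendsto _ atTop (𝓝 p.snd)
    exact hDc ▸ hD _ hc⟩

theorem isClosed_synthesisGraph {D : l2 → E}
    (hD : ∀ c ∈ domD ξ, Tendsto (fun k => ∑ n ∈ Finset.range k, c n • ξ n) atTop (𝓝 (D c)))
    (hDclosed : IsClosed {p : l2 × E | p.1 ∈ domD ξ ∧ D p.1 = p.2}) :
    IsClosed (synthesisGraph ξ : Set (WithLp 2 (l2 × E))) := by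
  convert hDclosed.preimage (WithLp.prod_continuous_ofLp 2 l2 E)
  ext p
  exact mem_synthesisGraph_iff hD

end SynthesisOperator

/-- Let `ξ` be a sequence in `H` whose synthesis operator `D_ξ` is closed.
The following are equivalent: (1) `ξ` is a lower semi-frame of `H`;
(2) there is a Bessel sequence `η` of `H` with `f = Σ_n ⟨f,η_n⟩ ξ_n` for every `f ∈ H`;
(3) `R(D_ξ) = H`, i.e. `D_ξ` is surjective. -/
theorem statement5 (ξ : ℕ → H)
    (Dfun : l2 → H)
    (hD : ∀ c ∈ domD ξ,
      Tendsto (fun k : ℕ => ∑ n ∈ Finset.range k, c n • ξ n) atTop (𝓝 (Dfun c)))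
    (hDclosed : IsClosed {p : l2 × H | p.1 ∈ domD ξ ∧ Dfun p.1 = p.2}) :
    List.TFAE
      [ ∃ A > (0 : ℝ), ∀ f : H,
          ENNReal.ofReal (A * ‖f‖ ^ 2) ≤ ∑' n : ℕ, ((‖⟪ξ n, f⟫_ℂ‖₊ : ℝ≥0∞) ^ 2),
        ∃ η : ℕ → H,
          (∃ B > (0 : ℝ), ∀ f : H,
            ∑' n : ℕ, ((‖⟪η n, f⟫_ℂ‖₊ : ℝ≥0∞) ^ 2) ≤ ENNReal.ofReal (B * ‖f‖ ^ 2)) ∧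
          ∀ f : H, Tendsto (fun k : ℕ => ∑ n ∈ Finset.range k, ⟪η n, f⟫_ℂ • ξ n) atTop (𝓝 f),
        ∀ h : H, ∃ c ∈ domD ξ, Dfun c = h ] := by
  have hG := isClosed_synthesisGraph hD hDclosed
  have hsurj : (∀ h : H, ∃ c ∈ domD ξ, Dfun c = h) ↔
      ∀ h : H, ∃ c : l2, WithLp.toLp 2 (c, h) ∈ synthesisGraph ξ := by
    simp only [mem_synthesisGraph_iff hD]
    rfl
  tfae_have 1 → 3
  | ⟨A, hA, hξ⟩ => hsurj.2 (IsLowerSemiFrameWith.exists_toLp_mem_synthesisGraph hξ hA hG)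
  tfae_have 3 → 2 := fun h3 =>
    let ⟨R, hR⟩ := (synthesisGraph ξ).exists_continuousLinearMap_toLp_mem hG (hsurj.1 h3)
    exists_isBesselWith_of_tendsto R hR
  tfae_have 2 → 1
  | ⟨η, ⟨B, hB, hη⟩, hrec⟩ =>
    ⟨B⁻¹, inv_pos.2 hB, IsBesselWith.isLowerSemiFrameWith_inv hB hη hrec⟩
  tfae_finish
end
end

section
/- Let ξ = (ξ_n)_{n∈ℕ} be a minimal sequence that is also a lower semi-frame of H (so that D(C_ξ) is automatically dense in H). Then S_ξ = T_ξ (equality of operators, including domains) if and only if ξ is a Schauder basis of H. -/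
noncomputable section
open scoped InnerProductSpace ComplexInnerProductSpace ComplexConjugate ENNReal
open Filter Topology

/- `H` is a separable complex Hilbert space. -/
variable {H : Type} [NormedAddCommGroup H] [InnerProductSpace ℂ H] [CompleteSpace H]
  [TopologicalSpace.SeparableSpace H]

/-!
Minimality yields a biorthogonal sequence `η` (`η k` is the component of `ξ k` orthogonal to all
other `ξ n`, normalized), so coefficients of expansions in `ξ` are unique, `η k ∈ D(C_ξ)` and
`S_ξ (η k) = ξ k`. The lower frame bound makes `C_ξ` injective with closed range, so by the Riesz
representation theorem every `f` is `T_ξ f₀` for some `f₀`, as soon as `D(C_ξ)` is dense.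

If `S_ξ = T_ξ`, then `ξ k = T_ξ (η k)` lies in the closure of `D(C_ξ)`, which is therefore
dense, and `f = T_ξ f₀ = S_ξ f₀ = Σ ⟨f₀, ξ n⟩ ξ n`. Conversely, for a Schauder basis the expansion
coefficients of `T_ξ f` are `⟨T_ξ f, η k⟩ = ⟨f, ξ k⟩`, so the frame series of `f` converges to
`T_ξ f`.
-/

section

variable {E : Type} [NormedAddCommGroup E] [InnerProductSpace ℂ E]

lemma exists_inner_eq_one_of_notMem (K : Submodule ℂ E) [K.HasOrthogonalProjection] {x : E}
    (hx : x ∉ K) : ∃ v ∈ Kᗮ, ⟪v, x⟫_ℂ = 1 := by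
  set u := x - K.starProjection x
  have hu : u ∈ Kᗮ := K.sub_starProjection_mem_orthogonal x
  have hux : ⟪u, x⟫_ℂ = ⟪u, u⟫_ℂ := by
    rw [inner_sub_right, K.inner_left_of_mem_orthogonal (K.starProjection_apply_mem x) hu,
      sub_zero]
  have hu0 : u ≠ 0 := fun h => hx (sub_eq_zero.1 h ▸ K.starProjection_apply_mem x)
  refine ⟨conj (⟪u, x⟫_ℂ)⁻¹ • u, K.orthogonal.smul_mem _ hu, ?_⟩
  rw [inner_smul_left, Complex.conj_conj, inv_mul_cancel₀ (hux ▸ inner_self_ne_zero.2 hu0)]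

variable {ξ : ℕ → E}

lemma tendsto_sum_mul_inner {a : ℕ → ℂ} {x : E} (g : E)
    (hx : Tendsto (fun m => ∑ n ∈ Finset.range m, a n • ξ n) atTop (𝓝 x)) :
    Tendsto (fun m => ∑ n ∈ Finset.range m, a n * ⟪g, ξ n⟫_ℂ) atTop (𝓝 ⟪g, x⟫_ℂ) := by
  simpa only [inner_sum, inner_smul_right] using (tendsto_const_nhds (x := g)).inner (𝕜 := ℂ) hx

lemma mem_domC_iff {f : E} : f ∈ domC ξ ↔ Summable fun n => ‖⟪ξ n, f⟫_ℂ‖ ^ 2 := by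
  simp [domC, memℓp_gen_iff (p := 2) (by norm_num)]

variable (ξ) in
def domCSubmodule : Submodule ℂ E where
  carrier := domC ξ
  add_mem' {f g} hf hg := by
    show Memℓp _ 2
    simp only [inner_add_right]
    exact hf.add hg
  zero_mem' := by
    show Memℓp _ 2
    simp only [inner_zero_right]
    exact zero_memℓp
  smul_mem' c f hf := by
    show Memℓp _ 2
    simp only [inner_smul_right]
    exact hf.const_smul c

variable (ξ) in
def analysisMap : domCSubmodule ξ →ₗ[ℂ] l2 where
  toFun f := ⟨fun n => ⟪ξ n, (f : E)⟫_ℂ, f.2⟩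
  map_add' _ _ := lp.ext <| funext fun _ => inner_add_right _ _ _
  map_smul' _ _ := lp.ext <| funext fun _ => inner_smul_right _ _ _

@[simp]
lemma analysisMap_apply (f : domCSubmodule ξ) (n : ℕ) : analysisMap ξ f n = ⟪ξ n, (f : E)⟫_ℂ :=
  rfl

lemma hasSum_inner_mul_inner (f g : domCSubmodule ξ) :
    HasSum (fun n => ⟪ξ n, (f : E)⟫_ℂ * ⟪(g : E), ξ n⟫_ℂ) ⟪analysisMap ξ g, analysisMap ξ f⟫_ℂ := by
  simpa [mul_comm] using lp.hasSum_inner (𝕜 := ℂ) (analysisMap ξ g) (analysisMap ξ f)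

lemma inner_sum_inner_smul_self (f : E) (m : ℕ) :
    ⟪f, ∑ n ∈ Finset.range m, ⟪ξ n, f⟫_ℂ • ξ n⟫_ℂ =
      ((∑ n ∈ Finset.range m, ‖⟪ξ n, f⟫_ℂ‖ ^ 2 : ℝ) : ℂ) := by
  rw [inner_sum, Complex.ofReal_sum]
  refine Finset.sum_congr rfl fun n _ => ?_
  rw [inner_smul_right, ← inner_conj_symm f (ξ n), RCLike.mul_conj]
  norm_cast

lemma mem_domC_of_tendsto {f L : E}
    (hL : Tendsto (fun m => ∑ n ∈ Finset.range m, ⟪ξ n, f⟫_ℂ • ξ n) atTop (𝓝 L)) :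
    f ∈ domC ξ := by
  have h := (Complex.continuous_re.tendsto _).comp
    ((tendsto_const_nhds (x := f)).inner (𝕜 := ℂ) hL)
  simp only [Function.comp_def, inner_sum_inner_smul_self, Complex.ofReal_re] at h
  exact mem_domC_iff.2 ((hasSum_iff_tendsto_nat_of_nonneg (fun n => sq_nonneg _) _).2 h).summable

lemma tsum_eq_inner_of_tendsto {f g L : E} (hg : g ∈ domC ξ)
    (hL : Tendsto (fun m => ∑ n ∈ Finset.range m, ⟪ξ n, f⟫_ℂ • ξ n) atTop (𝓝 L)) :
    ∑' n, ⟪ξ n, f⟫_ℂ * ⟪g, ξ n⟫_ℂ = ⟪g, L⟫_ℂ :=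
  tendsto_nhds_unique
    (hasSum_inner_mul_inner ⟨f, mem_domC_of_tendsto hL⟩ ⟨g, hg⟩).summable.hasSum.tendsto_sum_nat
    (tendsto_sum_mul_inner g hL)

variable (ξ) in
def IsLowerSemiFrame (A : ℝ) : Prop :=
  ∀ f : E, ENNReal.ofReal (A * ‖f‖ ^ 2) ≤ ∑' n : ℕ, ((‖⟪ξ n, f⟫_ℂ‖₊ : ℝ≥0∞) ^ 2)

namespace IsLowerSemiFrame

variable {A : ℝ}

lemma sqrt_mul_norm_le (hlow : IsLowerSemiFrame ξ A) (f : domCSubmodule ξ) :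
    √A * ‖(f : E)‖ ≤ ‖analysisMap ξ f‖ := by
  have hnorm : ‖analysisMap ξ f‖ ^ 2 = ∑' n, ‖⟪ξ n, (f : E)⟫_ℂ‖ ^ 2 := by
    simpa using lp.norm_rpow_eq_tsum (p := 2) (by norm_num) (analysisMap ξ f)
  have hsq : A * ‖(f : E)‖ ^ 2 ≤ ‖analysisMap ξ f‖ ^ 2 := by
    have h := hlow f
    simp_rw [← enorm_eq_nnnorm, ← ofReal_norm, ← ENNReal.ofReal_pow (norm_nonneg _)] at h
    rwa [← ENNReal.ofReal_tsum_of_nonneg (fun n => by positivity) (mem_domC_iff.1 f.2),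
      ENNReal.ofReal_le_ofReal_iff (by positivity), ← hnorm] at h
  simpa [Real.sqrt_mul' _ (sq_nonneg _)] using Real.sqrt_le_sqrt hsq

lemma injective_analysisMap (hA : 0 < A) (hlow : IsLowerSemiFrame ξ A) :
    Function.Injective (analysisMap ξ) := by
  refine (injective_iff_map_eq_zero _).2 fun f hf => ?_
  have h := hlow.sqrt_mul_norm_le f
  rw [hf, norm_zero] at h
  exact Subtype.ext (norm_le_zero_iff.1 (nonpos_of_mul_nonpos_right h (Real.sqrt_pos.2 hA)))

lemma eq_zero_of_forall_inner_eq_zero (hA : 0 < A) (hlow : IsLowerSemiFrame ξ A) {u : E}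
    (hu : ∀ n, ⟪ξ n, u⟫_ℂ = 0) : u = 0 := by
  have hmem : u ∈ domCSubmodule ξ := mem_domC_iff.2 (by simp [hu])
  have h := hlow.injective_analysisMap hA (a₁ := ⟨u, hmem⟩) (a₂ := 0)
    (lp.ext <| funext fun n => by simp [hu])
  exact congrArg Subtype.val h

lemma isClosed_range_analysisMap (hA : 0 < A) (hlow : IsLowerSemiFrame ξ A) [CompleteSpace E] :
    IsClosed (LinearMap.range (analysisMap ξ) : Set l2) := by
  refine isClosed_of_closure_subset fun c hc => ?_
  obtain ⟨x, hxC, hxc⟩ := mem_closure_iff_seq_limit.1 hc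
  choose F hF using hxC
  have hFx : ∀ m n, √A * dist (F m : E) (F n) ≤ dist (x m) (x n) := fun m n => by
    simpa [dist_eq_norm, hF] using hlow.sqrt_mul_norm_le (F m - F n)
  obtain ⟨b, hb0, hbx, hb⟩ := cauchySeq_iff_le_tendsto_0.1 hxc.cauchySeq
  have hFc : CauchySeq fun j => (F j : E) := by
    refine cauchySeq_iff_le_tendsto_0.2 ⟨fun N => (√A)⁻¹ * b N,
      fun N => mul_nonneg (by positivity) (hb0 N), fun m n N hm hn => ?_,
      by simpa using hb.const_mul (√A)⁻¹⟩
    dsimp only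
    rw [← div_eq_inv_mul, le_div_iff₀' (Real.sqrt_pos.2 hA)]
    exact (hFx m n).trans (hbx m n N hm hn)
  obtain ⟨f, hf⟩ := cauchySeq_tendsto_of_complete hFc
  have hcoord : ∀ n, c n = ⟪ξ n, f⟫_ℂ := fun n => by
    refine tendsto_nhds_unique ?_ ((tendsto_const_nhds (x := ξ n)).inner (𝕜 := ℂ) hf)
    have hx : Tendsto (fun j => x j n) atTop (𝓝 (c n)) :=
      tendsto_pi_nhds.1 (lp.uniformContinuous_coe.continuous.tendsto c |>.comp hxc) n
    simpa only [← hF, analysisMap_apply] using hx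
  have hfC : f ∈ domCSubmodule ξ := by
    have : (fun n => ⟪ξ n, f⟫_ℂ) = c := funext fun n => (hcoord n).symm
    exact (this ▸ c.2 : Memℓp (fun n => ⟪ξ n, f⟫_ℂ) 2)
  exact ⟨⟨f, hfC⟩, lp.ext <| funext fun n => (hcoord n).symm⟩


lemma exists_forall_tsum_eq_inner (hA : 0 < A) (hlow : IsLowerSemiFrame ξ A) [CompleteSpace E]
    (h : E) : ∃ f ∈ domC ξ, ∀ g ∈ domC ξ, ∑' n, ⟪ξ n, f⟫_ℂ * ⟪g, ξ n⟫_ℂ = ⟪g, h⟫_ℂ := by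
  have : CompleteSpace (LinearMap.range (analysisMap ξ)) :=
    (hlow.isClosed_range_analysisMap hA).completeSpace_coe
  let e := LinearEquiv.ofInjective _ (hlow.injective_analysisMap hA)
  have he : ∀ v, analysisMap ξ (e.symm v) = v := fun v =>
    (LinearEquiv.ofInjective_apply _ _).symm.trans (congrArg Subtype.val (e.apply_symm_apply v))
  let B := ((domCSubmodule ξ).subtype ∘ₗ e.symm.toLinearMap).mkContinuous (√A)⁻¹ fun v => by
    rw [← div_eq_inv_mul, le_div_iff₀' (Real.sqrt_pos.2 hA)]
    simpa [he] using hlow.sqrt_mul_norm_le (e.symm v)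
  refine ⟨e.symm (B.adjoint h), (e.symm _).2, fun g hg => ?_⟩
  let g' : domCSubmodule ξ := ⟨g, hg⟩
  calc ∑' n, ⟪ξ n, (e.symm (B.adjoint h) : E)⟫_ℂ * ⟪(g' : E), ξ n⟫_ℂ
      = ⟪(e g' : l2), (B.adjoint h : l2)⟫_ℂ := by
        rw [(hasSum_inner_mul_inner (e.symm (B.adjoint h)) g').tsum_eq, he,
          LinearEquiv.ofInjective_apply]
    _ = ⟪B (e g'), h⟫_ℂ := by rw [← Submodule.coe_inner, B.adjoint_inner_right]
    _ = ⟪(g' : E), h⟫_ℂ := by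
        rw [LinearMap.mkContinuous_apply, LinearMap.comp_apply, LinearEquiv.coe_coe,
          e.symm_apply_apply, Submodule.subtype_apply]

end IsLowerSemiFrame

lemma dense_domC_of_forall_inner_eq_zero [CompleteSpace E]
    (h : ∀ u, (∀ g ∈ domC ξ, ⟪g, u⟫_ℂ = 0) → u = 0) : Dense (domC ξ) := by
  have hbot : (domCSubmodule ξ)ᗮ = ⊥ := (Submodule.eq_bot_iff _).2 fun u hu =>
    h u fun _ hg => Submodule.inner_right_of_mem_orthogonal hg hu
  have hclosure := Submodule.orthogonal_orthogonal_eq_closure (domCSubmodule ξ)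
  rw [hbot, Submodule.bot_orthogonal_eq_top] at hclosure
  exact Submodule.dense_iff_topologicalClosure_eq_top.2 hclosure.symm

variable (ξ) in
def IsBiorthogonal (η : ℕ → E) : Prop :=
  ∀ k n, ⟪η k, ξ n⟫_ℂ = if n = k then 1 else 0

lemma exists_isBiorthogonal [CompleteSpace E]
    (hmin : ∀ k, ξ k ∉ closure ((Submodule.span ℂ (ξ '' {n | n ≠ k}) : Submodule ℂ E) : Set E)) :
    ∃ η, IsBiorthogonal ξ η := by
  have hη : ∀ k, ∃ v, ∀ n, ⟪v, ξ n⟫_ℂ = if n = k then 1 else 0 := fun k => by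
    set K := (Submodule.span ℂ (ξ '' {n | n ≠ k})).topologicalClosure
    obtain ⟨v, hvK, hv⟩ := exists_inner_eq_one_of_notMem K (x := ξ k)
      (by rw [← SetLike.mem_coe, Submodule.topologicalClosure_coe]; exact hmin k)
    refine ⟨v, fun n => ?_⟩
    split_ifs with hn
    · exact hn ▸ hv
    · exact K.inner_left_of_mem_orthogonal
        (Submodule.le_topologicalClosure _ (Submodule.subset_span ⟨n, hn, rfl⟩)) hvK
  choose η hη using hη
  exact ⟨η, hη⟩

namespace IsBiorthogonal

variable {η : ℕ → E}

lemma inner_right (hη : IsBiorthogonal ξ η) (k n : ℕ) :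
    ⟪ξ n, η k⟫_ℂ = if n = k then 1 else 0 := by
  rw [← inner_conj_symm, hη k n]
  split_ifs <;> simp

lemma mem_domC (hη : IsBiorthogonal ξ η) (k : ℕ) : η k ∈ domC ξ :=
  mem_domC_iff.2 <| summable_of_ne_finset_zero (s := {k}) fun n hn => by
    simp [hη.inner_right, Finset.mem_singleton.not.1 hn]

lemma inner_eq_of_tendsto (hη : IsBiorthogonal ξ η) {a : ℕ → ℂ} {x : E}
    (hx : Tendsto (fun m => ∑ n ∈ Finset.range m, a n • ξ n) atTop (𝓝 x)) (k : ℕ) :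
    ⟪η k, x⟫_ℂ = a k := by
  refine tendsto_nhds_unique (tendsto_sum_mul_inner (η k) hx)
    (tendsto_atTop_of_eventually_const (i₀ := k + 1) fun m hm => ?_)
  simp [hη k, Finset.mem_range, Nat.lt_of_succ_le hm]

lemma tendsto_frameSum (hη : IsBiorthogonal ξ η) (k : ℕ) :
    Tendsto (fun m => ∑ n ∈ Finset.range m, ⟪ξ n, η k⟫_ℂ • ξ n) atTop (𝓝 (ξ k)) :=
  tendsto_atTop_of_eventually_const (i₀ := k + 1) fun m hm => by
    simp [hη.inner_right, Finset.mem_range, Nat.lt_of_succ_le hm]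

lemma mem_domT [CompleteSpace E] (hη : IsBiorthogonal ξ η) (k : ℕ) : η k ∈ domT ξ := by
  set M := (domCSubmodule ξ).topologicalClosure
  refine ⟨hη.mem_domC k, M.starProjection (ξ k), ?_, fun g hg => ?_⟩
  · show _ ∈ closure (domCSubmodule ξ : Set E)
    rw [← Submodule.topologicalClosure_coe]
    exact M.starProjection_apply_mem _
  · rw [tsum_eq_inner_of_tendsto hg (hη.tendsto_frameSum k),
      ← M.inner_starProjection_left_eq_right,
      M.starProjection_eq_self_iff.2 (Submodule.le_topologicalClosure _ hg)]

lemma coeff_unique (hη : IsBiorthogonal ξ η) {a b : ℕ → ℂ} {x : E}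
    (ha : Tendsto (fun m => ∑ n ∈ Finset.range m, a n • ξ n) atTop (𝓝 x))
    (hb : Tendsto (fun m => ∑ n ∈ Finset.range m, b n • ξ n) atTop (𝓝 x)) : a = b :=
  funext fun k => (hη.inner_eq_of_tendsto ha k).symm.trans (hη.inner_eq_of_tendsto hb k)

end IsBiorthogonal

variable [CompleteSpace E] {η : ℕ → E} {A : ℝ} {Sfun Tfun : E → E}

lemma exists_expansion_of_domS_eq_domT (hη : IsBiorthogonal ξ η) (hA : 0 < A)
    (hlow : IsLowerSemiFrame ξ A)
    (hS : ∀ f ∈ domS ξ,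
      Tendsto (fun k => ∑ n ∈ Finset.range k, ⟪ξ n, f⟫_ℂ • ξ n) atTop (𝓝 (Sfun f)))
    (hT : ∀ f ∈ domT ξ, Tfun f ∈ closure (domC ξ) ∧
      ∀ g ∈ domC ξ, ∑' n, ⟪ξ n, f⟫_ℂ * ⟪g, ξ n⟫_ℂ = ⟪g, Tfun f⟫_ℂ)
    (hdom : domS ξ = domT ξ) (heq : ∀ f ∈ domS ξ, Sfun f = Tfun f) (f : E) :
    ∃ a : ℕ → ℂ, Tendsto (fun k => ∑ n ∈ Finset.range k, a n • ξ n) atTop (𝓝 f) := by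
  -- `S_ξ (η k) = ξ k`, while `T_ξ` takes values in the closure of `D(C_ξ)`.
  have hξ : ∀ k, ξ k ∈ closure (domC ξ) := fun k => by
    have hS' : η k ∈ domS ξ := hdom ▸ hη.mem_domT k
    rw [← tendsto_nhds_unique (hS _ hS') (hη.tendsto_frameSum k), heq _ hS']
    exact (hT _ (hη.mem_domT k)).1
  have hd : Dense (domC ξ) := dense_domC_of_forall_inner_eq_zero fun u hu =>
    hlow.eq_zero_of_forall_inner_eq_zero hA fun k =>
      (isClosed_eq (continuous_id.inner continuous_const) continuous_const).closure_subset_iff.2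
        hu (hξ k)
  obtain ⟨f₀, hf₀, hf₀T⟩ := hlow.exists_forall_tsum_eq_inner hA f
  have hT₀ : f₀ ∈ domT ξ := ⟨hf₀, f, hd.closure_eq ▸ Set.mem_univ f, hf₀T⟩
  have hS₀ : f₀ ∈ domS ξ := hdom ▸ hT₀
  have hTf₀ : Tfun f₀ = f :=
    hd.eq_of_inner_right ℂ fun g hg => ((hT f₀ hT₀).2 g hg).symm.trans (hf₀T g hg)
  have hf₀S := hS f₀ hS₀
  rw [heq f₀ hS₀, hTf₀] at hf₀S
  exact ⟨_, hf₀S⟩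

lemma domS_eq_domT_of_expansion (hη : IsBiorthogonal ξ η)
    (hS : ∀ f ∈ domS ξ,
      Tendsto (fun k => ∑ n ∈ Finset.range k, ⟪ξ n, f⟫_ℂ • ξ n) atTop (𝓝 (Sfun f)))
    (hT : ∀ f ∈ domT ξ, ∀ g ∈ domC ξ, ∑' n, ⟪ξ n, f⟫_ℂ * ⟪g, ξ n⟫_ℂ = ⟪g, Tfun f⟫_ℂ)
    (hexp : ∀ f : E, ∃ a : ℕ → ℂ,
      Tendsto (fun k => ∑ n ∈ Finset.range k, a n • ξ n) atTop (𝓝 f)) :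
    domS ξ = domT ξ ∧ ∀ f ∈ domS ξ, Sfun f = Tfun f := by
  have hd : Dense (domC ξ) := dense_domC_of_forall_inner_eq_zero fun u hu => by
    obtain ⟨a, ha⟩ := hexp u
    have ha0 : a = 0 :=
      funext fun k => (hη.inner_eq_of_tendsto ha k).symm.trans (hu _ (hη.mem_domC k))
    simp only [ha0, Pi.zero_apply, zero_smul, Finset.sum_const_zero] at ha
    exact tendsto_nhds_unique tendsto_const_nhds ha |>.symm
  have hST : domS ξ ⊆ domT ξ := fun f ⟨L, hL⟩ =>
    ⟨mem_domC_of_tendsto hL, L, hd.closure_eq ▸ Set.mem_univ L,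
      fun _ hg => tsum_eq_inner_of_tendsto hg hL⟩
  have hTS : domT ξ ⊆ domS ξ := fun f hf => by
    obtain ⟨a, ha⟩ := hexp (Tfun f)
    have hak : ∀ k, a k = ⟪ξ k, f⟫_ℂ := fun k => by
      rw [← hη.inner_eq_of_tendsto ha k, ← hT f hf _ (hη.mem_domC k)]
      simp [hη k]
    exact ⟨Tfun f, by simpa only [hak] using ha⟩
  refine ⟨hST.antisymm hTS, fun f hf => ?_⟩
  obtain ⟨L, hL⟩ := hf
  rw [tendsto_nhds_unique (hS f ⟨L, hL⟩) hL]
  exact hd.eq_of_inner_right ℂ fun g hg => (tsum_eq_inner_of_tendsto hg hL).symm.trans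
    (hT f (hST ⟨L, hL⟩) g hg)

end

/-- Let `ξ` be a minimal sequence which is also a lower semi-frame of `H`.
Then `S_ξ = T_ξ` (equality of domains included) if and only if `ξ` is a Schauder basis of `H`,
i.e. every `f ∈ H` has a unique representation `f = Σ_n a_n ξ_n` (norm convergence of the
ordered partial sums). -/
theorem statement11 (ξ : ℕ → H)
    (hmin : ∀ k : ℕ, ξ k ∉ closure ((Submodule.span ℂ (ξ '' {n : ℕ | n ≠ k}) : Submodule ℂ H) : Set H))
    (A : ℝ) (hA : 0 < A)
    (hlow : ∀ f : H, ENNReal.ofReal (A * ‖f‖ ^ 2) ≤ ∑' n : ℕ, ((‖⟪ξ n, f⟫_ℂ‖₊ : ℝ≥0∞) ^ 2))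
    (Sfun : H → H)
    (hS : ∀ f ∈ domS ξ,
      Tendsto (fun k : ℕ => ∑ n ∈ Finset.range k, ⟪ξ n, f⟫_ℂ • ξ n) atTop (𝓝 (Sfun f)))
    (Tfun : H → H)
    (hT : ∀ f ∈ domT ξ, Tfun f ∈ closure (domC ξ) ∧
      ∀ g ∈ domC ξ, ∑' n : ℕ, ⟪ξ n, f⟫_ℂ * ⟪g, ξ n⟫_ℂ = ⟪g, Tfun f⟫_ℂ) :
    (domS ξ = domT ξ ∧ ∀ f ∈ domS ξ, Sfun f = Tfun f)
      ↔ ∀ f : H, ∃! a : ℕ → ℂ,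
          Tendsto (fun k : ℕ => ∑ n ∈ Finset.range k, a n • ξ n) atTop (𝓝 f) := by
  obtain ⟨η, hη⟩ := exists_isBiorthogonal hmin
  constructor
  · rintro ⟨hdom, heq⟩ f
    obtain ⟨a, ha⟩ := exists_expansion_of_domS_eq_domT hη hA hlow hS hT hdom heq f
    exact ⟨a, ha, fun b hb => hη.coeff_unique hb ha⟩
  · intro hbasis
    exact domS_eq_domT_of_expansion hη hS (fun f hf => (hT f hf).2) fun f => (hbasis f).exists
end
end
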